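/- For the drift $q(x)=\frac{1}{2x}-\frac{rx}{2}+\frac{k\sigma x^3}{8}$ with $r,k,\sigma>0$ and $Q(y)=\log y-\frac r2(y^2-1)+\frac{k\sigma}{16}(y^4-1)$, the boundary $\infty$ satisfies $J(\infty)=\int_1^\infty e^{-Q(y)}\big(\int_1^y e^{Q(z)}dz\big)dy<\infty$, i.e. the entrance-boundary integral at infinity is finite. -/
import Mathlib


open MeasureTheory

set_option maxHeartbeats 1000000 in
/-- For the drift of the transformed logistic Feller diffusion, with
`Q(y) = log y - (r/2)(y²-1) + (kσ/16)(y⁴-1)`, the entrance-boundary integral at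
infinity is finite: `J(∞) = ∫₁^∞ e^{-Q(y)} (∫₁^y e^{Q(z)} dz) dy < ∞`. -/
theorem logistic_feller_entrance_at_infinity
    (σ r k : ℝ) (hσ : 0 < σ) (hr : 0 < r) (hk : 0 < k)
    (Q : ℝ → ℝ)
    (hQ : ∀ y, Q y = Real.log y - r / 2 * (y ^ 2 - 1) + k * σ / 16 * (y ^ 4 - 1)) :
    (∫⁻ y in Set.Ioi (1:ℝ), ENNReal.ofReal
        (Real.exp (-(Q y)) * ∫ z in (1:ℝ)..y, Real.exp (Q z))) ≠ ⊤ := by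
  obtain ⟨a, ha, hQ'⟩ : ∃ a : ℝ, 0 < a ∧
      ∀ y, Q y = Real.log y - r / 2 * (y ^ 2 - 1) + a * (y ^ 4 - 1) :=
    ⟨k * σ / 16, by positivity, hQ⟩
  clear hQ
  obtain ⟨M, hM1, hM2⟩ : ∃ M : ℝ, 1 < M ∧ r < a * M ^ 2 := by
    refine ⟨1 + Real.sqrt (r / a), ?_, ?_⟩
    · have : 0 < Real.sqrt (r / a) := Real.sqrt_pos.mpr (by positivity)
      linarith
    · have h0 : (0:ℝ) ≤ r / a := by positivity
      have hs := Real.sq_sqrt h0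
      have hsn := Real.sqrt_nonneg (r / a)
      have h2 : r / a < (1 + Real.sqrt (r / a)) ^ 2 := by nlinarith
      calc r = a * (r / a) := by field_simp
        _ < a * (1 + Real.sqrt (r / a)) ^ 2 := (mul_lt_mul_iff_right₀ ha).mpr h2
  -- continuity of exp ∘ Q on Ici 1
  have hQc : ContinuousOn Q (Set.Ici (1:ℝ)) := by
    have h1 : ContinuousOn (fun y : ℝ =>
        Real.log y - r / 2 * (y ^ 2 - 1) + a * (y ^ 4 - 1)) (Set.Ici (1:ℝ)) := by
      apply ContinuousOn.add
      · apply ContinuousOn.sub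
        · exact Real.continuousOn_log.mono (by
            intro x hx
            simp only [Set.mem_compl_iff, Set.mem_singleton_iff]
            intro h; rw [h] at hx; exact absurd hx (by norm_num))
        · fun_prop
      · fun_prop
    exact h1.congr (fun y _ => hQ' y)
  have hexpQc : ContinuousOn (fun z => Real.exp (Q z)) (Set.Ici (1:ℝ)) :=
    Real.continuous_exp.comp_continuousOn hQc
  have hIntExp : ∀ y : ℝ, 1 ≤ y → IntervalIntegrable (fun z => Real.exp (Q z)) volume 1 y := by
    intro y hy
    apply ContinuousOn.intervalIntegrable
    apply hexpQc.mono
    rw [Set.uIcc_of_le hy]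
    exact fun x hx => hx.1
  -- bound for Q on [1, M]
  obtain ⟨B, hQbound⟩ : ∃ B : ℝ, ∀ t ∈ Set.Icc (1:ℝ) M, -B ≤ Q t ∧ Q t ≤ B := by
    refine ⟨Real.log M + r / 2 * M ^ 2 + a * M ^ 4, ?_⟩
    intro t ht
    obtain ⟨ht1, htM⟩ := ht
    have hlog0 : 0 ≤ Real.log t := Real.log_nonneg ht1
    have hlogle : Real.log t ≤ Real.log M := Real.log_le_log (by linarith) htM
    have hlogM : 0 ≤ Real.log M := Real.log_nonneg (by linarith)
    rw [hQ' t]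
    have e1 : 0 ≤ r / 2 * (t ^ 2 - 1) := mul_nonneg (by linarith) (by nlinarith)
    have e2 : r / 2 * (t ^ 2 - 1) ≤ r / 2 * M ^ 2 :=
      mul_le_mul_of_nonneg_left (by nlinarith) (by linarith)
    have e3 : 0 ≤ a * (t ^ 4 - 1) := mul_nonneg ha.le (by nlinarith)
    have e4 : a * (t ^ 4 - 1) ≤ a * M ^ 4 := by
      have := pow_le_pow_left₀ (by linarith : (0:ℝ) ≤ t) htM 4
      exact mul_le_mul_of_nonneg_left (by linarith) ha.le
    constructor <;> linarith
  -- split the integral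
  have hsplit : Set.Ioi (1:ℝ) = Set.Ioc 1 M ∪ Set.Ioi M := (Set.Ioc_union_Ioi_eq_Ioi hM1.le).symm
  rw [hsplit, lintegral_union measurableSet_Ioi (Set.Ioc_disjoint_Ioi le_rfl)]
  have piece1 : (∫⁻ y in Set.Ioc (1:ℝ) M, ENNReal.ofReal
      (Real.exp (-(Q y)) * ∫ z in (1:ℝ)..y, Real.exp (Q z))) < ⊤ := by
    have hb : ∀ y ∈ Set.Ioc (1:ℝ) M, ENNReal.ofReal
        (Real.exp (-(Q y)) * ∫ z in (1:ℝ)..y, Real.exp (Q z))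
        ≤ ENNReal.ofReal ((M - 1) * (Real.exp B * Real.exp B)) := by
      intro y hy
      obtain ⟨hy1, hyM⟩ := hy
      apply ENNReal.ofReal_le_ofReal
      have hQy := hQbound y ⟨hy1.le, hyM⟩
      have hinner : (∫ z in (1:ℝ)..y, Real.exp (Q z)) ≤ (y - 1) * Real.exp B := by
        calc (∫ z in (1:ℝ)..y, Real.exp (Q z)) ≤ ∫ _ in (1:ℝ)..y, Real.exp B := by
              apply intervalIntegral.integral_mono_on hy1.le (hIntExp y hy1.le)
                intervalIntegrable_const
              intro z hz
              exact Real.exp_le_exp.mpr (hQbound z ⟨hz.1, hz.2.trans hyM⟩).2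
          _ = (y - 1) * Real.exp B := by simp
      have hEB := Real.exp_pos B
      calc Real.exp (-(Q y)) * ∫ z in (1:ℝ)..y, Real.exp (Q z)
          ≤ Real.exp B * ((y - 1) * Real.exp B) := by
            apply mul_le_mul _ hinner _ (Real.exp_pos _).le
            · exact Real.exp_le_exp.mpr (by linarith [hQy.1])
            · exact intervalIntegral.integral_nonneg hy1.le (fun z _ => (Real.exp_pos _).le)
        _ ≤ (M - 1) * (Real.exp B * Real.exp B) := by nlinarith [mul_pos hEB hEB]
    have hle := setLIntegral_mono' (μ := volume) measurableSet_Ioc hb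
    refine lt_of_le_of_lt hle ?_
    rw [setLIntegral_const, Real.volume_Ioc]
    exact ENNReal.mul_lt_top ENNReal.ofReal_lt_top ENNReal.ofReal_lt_top
  have piece2 : (∫⁻ y in Set.Ioi M, ENNReal.ofReal
      (Real.exp (-(Q y)) * ∫ z in (1:ℝ)..y, Real.exp (Q z))) < ⊤ := by
    have hb : ∀ y ∈ Set.Ioi M, ENNReal.ofReal
        (Real.exp (-(Q y)) * ∫ z in (1:ℝ)..y, Real.exp (Q z))
        ≤ ENNReal.ofReal (2 / a * y ^ (-2 : ℝ)) := by
      intro y hy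
      have hyM : M < y := hy
      have hy1 : (1:ℝ) < y := hM1.trans hyM
      have hy0 : (0:ℝ) < y := by linarith
      have hay : r < a * y ^ 2 := by
        have hMy2 : M ^ 2 ≤ y ^ 2 := by nlinarith
        nlinarith
      apply ENNReal.ofReal_le_ofReal
      obtain ⟨c, hc_def, hc⟩ : ∃ c : ℝ, c = a / 2 * y ^ 3 ∧ 0 < c :=
        ⟨a / 2 * y ^ 3, rfl, by positivity⟩
      -- pointwise bound: Q z ≤ Q y - c * (y - z) for z ∈ [1, y]
      have hptwise : ∀ z ∈ Set.Icc (1:ℝ) y, Real.exp (Q z) ≤ Real.exp (Q y - c * (y - z)) := by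
        intro z hz
        obtain ⟨hz1, hzy⟩ := hz
        have hz0 : (0:ℝ) < z := by linarith
        apply Real.exp_le_exp.mpr
        rw [hQ' z, hQ' y, hc_def]
        have hlog : Real.log z ≤ Real.log y := Real.log_le_log hz0 hzy
        have h1 : 0 ≤ (y - z) * (y * (a * y ^ 2 - r)) :=
          mul_nonneg (by linarith) (mul_nonneg hy0.le (by linarith))
        have h2 : 0 ≤ (y - z) * (z * (2 * (a * y ^ 2) - r)) :=
          mul_nonneg (by linarith) (mul_nonneg hz0.le (by linarith))
        have h3 : 0 ≤ (y - z) * (a * y * z ^ 2 + a * z ^ 3) := by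
          apply mul_nonneg (by linarith)
          have u1 : 0 ≤ a * y * z ^ 2 := by positivity
          have u2 : 0 ≤ a * z ^ 3 := by positivity
          linarith
        nlinarith [h1, h2, h3]
      have hinner : (∫ z in (1:ℝ)..y, Real.exp (Q z)) ≤ Real.exp (Q y) / c := by
        have hint2 : IntervalIntegrable (fun z => Real.exp (Q y - c * (y - z))) volume 1 y := by
          apply Continuous.intervalIntegrable; fun_prop
        have hval : (∫ z in (1:ℝ)..y, Real.exp (Q y - c * (y - z)))
            = Real.exp (Q y - c * (y - y)) / c - Real.exp (Q y - c * (y - 1)) / c := by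
          have hderiv : ∀ z ∈ Set.uIcc (1:ℝ) y,
              HasDerivAt (fun t => Real.exp (Q y - c * (y - t)) / c)
                (Real.exp (Q y - c * (y - z))) z := by
            intro z _
            have h1 : HasDerivAt (fun t : ℝ => Q y - c * (y - t)) c z := by
              have := (((hasDerivAt_id z).const_sub y).const_mul c).const_sub (Q y)
              simpa using this
            have h2 := (h1.exp).div_const c
            have hcc : c * 1 / c = 1 := by field_simp
            simpa [mul_comm, mul_div_assoc, mul_div_cancel_left₀ _ (ne_of_gt hc)] using h2
          rw [intervalIntegral.integral_eq_sub_of_hasDerivAt hderiv hint2]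
        calc (∫ z in (1:ℝ)..y, Real.exp (Q z))
            ≤ ∫ z in (1:ℝ)..y, Real.exp (Q y - c * (y - z)) := by
              apply intervalIntegral.integral_mono_on hy1.le (hIntExp y hy1.le) hint2
              intro z hz; exact hptwise z hz
          _ = Real.exp (Q y - c * (y - y)) / c - Real.exp (Q y - c * (y - 1)) / c := hval
          _ ≤ Real.exp (Q y) / c := by
              have h0 : 0 ≤ Real.exp (Q y - c * (y - 1)) / c := by positivity
              have h1 : Real.exp (Q y - c * (y - y)) / c = Real.exp (Q y) / c := by norm_num
              linarith
      have hfinal : Real.exp (-(Q y)) * ∫ z in (1:ℝ)..y, Real.exp (Q z) ≤ 1 / c := by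
        calc Real.exp (-(Q y)) * ∫ z in (1:ℝ)..y, Real.exp (Q z)
            ≤ Real.exp (-(Q y)) * (Real.exp (Q y) / c) :=
              mul_le_mul_of_nonneg_left hinner (Real.exp_pos _).le
          _ = 1 / c := by
              rw [mul_div_assoc', ← Real.exp_add, neg_add_cancel, Real.exp_zero]
      refine hfinal.trans ?_
      have hr2 : (2 : ℝ) / a * y ^ (-2 : ℝ) = 2 / (a * y ^ 2) := by
        have hpow : y ^ (-2 : ℝ) = (y ^ (2:ℕ))⁻¹ := by
          rw [show ((-2:ℝ)) = -((2:ℕ):ℝ) by norm_num, Real.rpow_neg hy0.le, Real.rpow_natCast]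
        rw [hpow]
        field_simp
      rw [hr2, div_le_div_iff₀ hc (by positivity), hc_def]
      have hy23 : y ^ 2 ≤ y ^ 3 := by nlinarith
      nlinarith [mul_le_mul_of_nonneg_left hy23 ha.le]
    have hmeas : Measurable (fun y : ℝ => ENNReal.ofReal (2 / a * y ^ (-2 : ℝ))) := by
      apply ENNReal.measurable_ofReal.comp
      fun_prop
    have hintg : MeasureTheory.IntegrableOn (fun y : ℝ => 2 / a * y ^ (-2 : ℝ)) (Set.Ioi M) :=
      (integrableOn_Ioi_rpow_of_lt (by norm_num) (by linarith : (0:ℝ) < M)).const_mul _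
    exact lt_of_le_of_lt (setLIntegral_mono hmeas hb) hintg.setLIntegral_lt_top
  exact (ENNReal.add_lt_top.mpr ⟨piece1, piece2⟩).ne
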